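/- Let C be a pointed, spanning polyhedral cone in E = ℝⁿ, let D ⊆ E be a downset, and let σ be a face of C. Then the set D^σ := {a ∈ E | a − σ° ⊆ D} is itself a downset for the order induced by C, and it satisfies D ⊆ D^σ ⊆ closure(D), where closure denotes topological closure in E. -/

import Mathlib

open Pointwise

/-- A polyhedral cone in `ℝⁿ`: an intersection of finitely many closed linear half-spaces. -/
def IsPolyCone {n : ℕ} (C : Set (Fin n → ℝ)) : Prop :=
  ∃ (m : ℕ) (ℓ : Fin m → ((Fin n → ℝ) →ₗ[ℝ] ℝ)), C = {x | ∀ i, 0 ≤ ℓ i x}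

/-- A face of a cone `C`: a subset of `C` containing `0`, closed under addition, and such
that whenever `x, y ∈ C` and `x + y` lies in the subset, both `x` and `y` do. -/
def IsConeFace {M : Type*} [AddCommMonoid M] (σ C : Set M) : Prop :=
  σ ⊆ C ∧ (0 : M) ∈ σ ∧ (∀ x ∈ σ, ∀ y ∈ σ, x + y ∈ σ) ∧
    ∀ x ∈ C, ∀ y ∈ C, x + y ∈ σ → x ∈ σ ∧ y ∈ σ

/-- A downset for the partial order `x ≼ y ↔ y - x ∈ C`. -/
def IsDownset {n : ℕ} (C D : Set (Fin n → ℝ)) : Prop :=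
  ∀ x y : Fin n → ℝ, y ∈ D → y - x ∈ C → x ∈ D

/-- The upper boundary downset `D^σ = {a | a - σ° ⊆ D}`. -/
def upSet {n : ℕ} (D σ : Set (Fin n → ℝ)) : Set (Fin n → ℝ) :=
  {a | ∀ s ∈ intrinsicInterior ℝ σ, a - s ∈ D}

/-- `a` is a cogenerator of the downset `D` along the face `τ` with nadir `σ`:
`(a + C) ∩ D^σ = a + τ` and no face `σ''` with `τ ⊆ σ'' ⊊ σ` satisfies `a - σ''° ⊆ D`. -/
def IsCogen {n : ℕ} (C D τ σ : Set (Fin n → ℝ)) (a : Fin n → ℝ) : Prop :=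
  (({a} + C) ∩ upSet D σ = {a} + τ) ∧
  ∀ σ'' : Set (Fin n → ℝ), IsConeFace σ'' C → τ ⊆ σ'' → σ'' ⊂ σ →
    ¬ (∀ s ∈ intrinsicInterior ℝ σ'', a - s ∈ D)

/-- A `σ`-vicinity of a point `p` of `E ⧸ span τ`: the image under the quotient map of
`u + σ° + C` for some `u` admitting a representative `w` of `p` with `w - u ∈ σ°`. -/
def IsVic {n : ℕ} (C σ τ : Set (Fin n → ℝ))
    (p : (Fin n → ℝ) ⧸ Submodule.span ℝ τ)
    (V : Set ((Fin n → ℝ) ⧸ Submodule.span ℝ τ)) : Prop :=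
  ∃ u w : Fin n → ℝ, (Submodule.span ℝ τ).mkQ w = p ∧
    w - u ∈ intrinsicInterior ℝ σ ∧
    V = (Submodule.span ℝ τ).mkQ '' ({u} + intrinsicInterior ℝ σ + C)

/-! A face `σ` of a cone is itself a cone, so its relative interior is invariant under positive
dilations and therefore accumulates at `0`. Hence if `a - σ° ⊆ D`, the points `a - t • s₀`
(`s₀ ∈ σ°`, `t → 0⁺`) of `D` converge to `a`. The downset properties are pure translation. -/

open Set

theorem IsPolyCone.smul_mem {n : ℕ} {C : Set (Fin n → ℝ)} (hC : IsPolyCone C) {t : ℝ}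
    (ht : 0 ≤ t) {x : Fin n → ℝ} (hx : x ∈ C) : t • x ∈ C := by
  obtain ⟨m, ℓ, rfl⟩ := hC
  intro i
  simpa only [map_smul, smul_eq_mul] using mul_nonneg ht (hx i)

theorem intrinsicInterior_smul₀ {𝕜 V : Type*} [Field 𝕜] [AddCommGroup V] [Module 𝕜 V]
    [TopologicalSpace V] [ContinuousConstSMul 𝕜 V] {t : 𝕜} (ht : t ≠ 0) (s : Set V) :
    intrinsicInterior 𝕜 (t • s) = t • intrinsicInterior 𝕜 s := by
  have h := ContinuousAffineEquiv.intrinsicInterior_image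
    (ContinuousLinearEquiv.smulLeft (R₁ := 𝕜) (Units.mk0 t ht)).toContinuousAffineEquiv s
  have hφ : ⇑(ContinuousLinearEquiv.smulLeft (R₁ := 𝕜) (M₁ := V)
      (Units.mk0 t ht)).toContinuousAffineEquiv = (t • ·) := rfl
  rwa [hφ, image_smul, image_smul] at h

theorem zero_mem_closure_intrinsicInterior {V : Type*} [AddCommGroup V] [Module ℝ V]
    [TopologicalSpace V] [ContinuousSMul ℝ V] {σ : Set V}
    (hne : (intrinsicInterior ℝ σ).Nonempty) (hcone : ∀ t : ℝ, 0 < t → t • σ = σ) :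
    (0 : V) ∈ closure (intrinsicInterior ℝ σ) := by
  obtain ⟨s₀, hs₀⟩ := hne
  have hray : (· • s₀) '' Ioi (0 : ℝ) ⊆ intrinsicInterior ℝ σ := by
    rintro _ ⟨t, ht, rfl⟩
    rw [← hcone t ht, intrinsicInterior_smul₀ (ne_of_gt ht)]
    exact smul_mem_smul_set hs₀
  have h0 : (0 : ℝ) • s₀ ∈ closure ((· • s₀) '' Ioi (0 : ℝ)) :=
    mem_closure_image (continuous_id.smul continuous_const).continuousAt
      (by simp only [closure_Ioi, mem_Ici, le_refl])
  rw [zero_smul] at h0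
  exact closure_mono hray h0

namespace IsConeFace

theorem nsmul_mem {M : Type*} [AddCommMonoid M] {C σ : Set M} (hσ : IsConeFace σ C) (k : ℕ)
    {x : M} (hx : x ∈ σ) : k • x ∈ σ := by
  induction k with
  | zero => simpa only [zero_smul] using hσ.2.1
  | succ k ih => simpa only [succ_nsmul] using hσ.2.2.1 _ ih _ hx

variable {M : Type*} [AddCommGroup M] [Module ℝ M] {C σ : Set M}
  (hC : ∀ t : ℝ, 0 ≤ t → ∀ x ∈ C, t • x ∈ C)
include hC

theorem smul_mem_of_le_one (hσ : IsConeFace σ C) {t : ℝ} (ht0 : 0 ≤ t) (ht1 : t ≤ 1)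
    {x : M} (hx : x ∈ σ) : t • x ∈ σ := by
  have hsplit : t • x + (1 - t) • x = x := by rw [← add_smul, add_sub_cancel, one_smul]
  exact (hσ.2.2.2 _ (hC t ht0 x (hσ.1 hx)) _ (hC (1 - t) (by linarith) x (hσ.1 hx))
    (by rwa [hsplit])).1

theorem smul_mem (hσ : IsConeFace σ C) {t : ℝ} (ht : 0 ≤ t) {x : M} (hx : x ∈ σ) :
    t • x ∈ σ := by
  obtain ⟨k, hk⟩ := exists_nat_gt t
  have hk0 : (0 : ℝ) < k := ht.trans_lt hk
  have hscale : t • x = (t / k) • (k • x) := by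
    rw [← Nat.cast_smul_eq_nsmul ℝ, smul_smul, div_mul_cancel₀ t hk0.ne']
  rw [hscale]
  exact hσ.smul_mem_of_le_one hC (div_nonneg ht hk0.le) ((div_le_one hk0).2 hk.le)
    (hσ.nsmul_mem k hx)

theorem smul_set_eq (hσ : IsConeFace σ C) {t : ℝ} (ht : 0 < t) : t • σ = σ := by
  refine (smul_set_subset_iff.2 fun x hx => hσ.smul_mem hC ht.le hx).antisymm fun x hx => ?_
  rw [mem_smul_set_iff_inv_smul_mem₀ ht.ne']
  exact hσ.smul_mem hC (inv_nonneg.2 ht.le) hx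

theorem convex (hσ : IsConeFace σ C) : Convex ℝ σ :=
  fun _ hx _ hy _ _ ha hb _ => hσ.2.2.1 _ (hσ.smul_mem hC ha hx) _ (hσ.smul_mem hC hb hy)

end IsConeFace

namespace IsDownset

variable {n : ℕ} {C D : Set (Fin n → ℝ)}

theorem upSet (hD : IsDownset C D) (σ : Set (Fin n → ℝ)) : IsDownset C (upSet D σ) :=
  fun x y hy hyx s hs => hD (x - s) (y - s) (hy s hs) (by rwa [sub_sub_sub_cancel_right])

theorem subset_upSet (hD : IsDownset C D) {σ : Set (Fin n → ℝ)} (hσC : σ ⊆ C) :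
    D ⊆ _root_.upSet D σ :=
  fun a ha s hs => hD (a - s) a ha <| by
    rw [sub_sub_cancel]; exact hσC (intrinsicInterior_subset hs)

end IsDownset

theorem upSet_subset_closure {n : ℕ} {D σ : Set (Fin n → ℝ)}
    (h0 : (0 : Fin n → ℝ) ∈ closure (intrinsicInterior ℝ σ)) : upSet D σ ⊆ closure D := by
  intro a ha
  have hlim : a - 0 ∈ closure ((a - ·) '' intrinsicInterior ℝ σ) :=
    mem_closure_image (continuous_const.sub continuous_id).continuousAt h0
  rw [sub_zero] at hlim
  exact closure_mono (image_subset_iff.2 ha) hlim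

theorem upSet_isDownset_and_between_general {n : ℕ} (C D σ : Set (Fin n → ℝ))
    (hC : IsPolyCone C) (hD : IsDownset C D) (hσ : IsConeFace σ C) :
    IsDownset C (upSet D σ) ∧ D ⊆ upSet D σ ∧ upSet D σ ⊆ closure D := by
  have hCsmul : ∀ t : ℝ, 0 ≤ t → ∀ x ∈ C, t • x ∈ C := fun _ ht _ hx => hC.smul_mem ht hx
  have hinterior : (intrinsicInterior ℝ σ).Nonempty :=
    Set.Nonempty.intrinsicInterior (hσ.convex hCsmul) ⟨0, hσ.2.1⟩
  have hcone : ∀ t : ℝ, 0 < t → t • σ = σ := fun _ ht => hσ.smul_set_eq hCsmul ht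
  exact ⟨hD.upSet σ, hD.subset_upSet hσ.1,
    upSet_subset_closure (zero_mem_closure_intrinsicInterior hinterior hcone)⟩

/-- `D^σ = {a | a - σ° ⊆ D}` is a downset and `D ⊆ D^σ ⊆ closure D`. -/
theorem upSet_isDownset_and_between {n : ℕ} (C D σ : Set (Fin n → ℝ))
    (hC : IsPolyCone C) (hpointed : C ∩ (-C) = {0}) (hspan : C - C = Set.univ)
    (hD : IsDownset C D) (hσ : IsConeFace σ C) :
    IsDownset C (upSet D σ) ∧ D ⊆ upSet D σ ∧ upSet D σ ⊆ closure D :=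
  upSet_isDownset_and_between_general C D σ hC hD hσ
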